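/- The polymorphic substitution concretisation preserves binary meets (Lemma 2 for PSub): for all polymorphic abstract substitutions θ♯, σ♯ : V → Set (Set Para) and every assignment κ : Para → Bool, Υ_sub(θ♯ ⊓ σ♯, κ) = Υ_sub(θ♯, κ) ∩ Υ_sub(σ♯, κ), where θ♯ ⊓ σ♯ is the pointwise meet (θ♯ ⊓ σ♯)(X) := θ♯(X) ⊛ σ♯(X) with 𝒮₁ ⊛ 𝒮₂ := { S₁ ∪ S₂ | S₁ ∈ 𝒮₁, S₂ ∈ 𝒮₂ }. -/
import Mathlib


/-- `ModeLe 𝒮₁ 𝒮₂` is the relation `𝒮₁ ≪ 𝒮₂` on polymorphic mode descriptions: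
for every `S₁ ∈ 𝒮₁` there exists `S₂ ∈ 𝒮₂` with `S₂ ⊆ S₁`. -/
def ModeLe {Para : Type*} (𝒮₁ 𝒮₂ : Set (Set Para)) : Prop :=
  ∀ S₁ ∈ 𝒮₁, ∃ S₂ ∈ 𝒮₂, S₂ ⊆ S₁

/-- The interpreted mode of a description `𝒮` under an assignment `κ`,
`eval 𝒮 κ := ⨆ S ∈ 𝒮, ⨅ α ∈ S, κ α`, computed in the two-element complete
lattice `Bool` (with `g = false < u = true`). -/
noncomputable def evalDesc {Para : Type*} (𝒮 : Set (Set Para)) (κ : Para → Bool) : Bool :=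
  ⨆ S ∈ 𝒮, ⨅ α ∈ S, κ α

/-- `ModeProd 𝒮₁ 𝒮₂` is `𝒮₁ ⊛ 𝒮₂ := { S₁ ∪ S₂ | S₁ ∈ 𝒮₁, S₂ ∈ 𝒮₂ }`. -/
def ModeProd {Para : Type*} (𝒮₁ 𝒮₂ : Set (Set Para)) : Set (Set Para) :=
  {S | ∃ S₁ ∈ 𝒮₁, ∃ S₂ ∈ 𝒮₂, S = S₁ ∪ S₂}

/-- `modecon` sends the ground mode `false` to the set `Ground` of ground terms
and the unknown mode `true` to the set of all terms. -/
def modecon {Term : Type*} (Ground : Set Term) : Bool → Set Term :=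
  fun b => if b then Set.univ else Ground

/-- The polymorphic term concretisation `Υ_term(𝒮, κ) := modecon (eval 𝒮 κ)`. -/
noncomputable def pTermCon {Para Term : Type*} (Ground : Set Term)
    (𝒮 : Set (Set Para)) (κ : Para → Bool) : Set Term :=
  modecon Ground (evalDesc 𝒮 κ)

/-- The polymorphic substitution concretisation
`Υ_sub(θ♯, κ) := { θ | ∀ X, θ X ∈ Υ_term(θ♯ X, κ) }`. -/
noncomputable def pSubCon {Para V Term : Type*} (Ground : Set Term)
    (θs : V → Set (Set Para)) (κ : Para → Bool) : Set (V → Term) :=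
  {θ | ∀ X : V, θ X ∈ pTermCon Ground (θs X) κ}

lemma bool_iInf_eq_true_iff {ι : Type*} (S : Set ι) (f : ι → Bool) :
    (⨅ α ∈ S, f α) = true ↔ ∀ α ∈ S, f α = true := by
  simp only [show (true : Bool) = ⊤ from rfl, iInf_eq_top]

lemma bool_eval_eq_true_iff {Para : Type*} (𝒮 : Set (Set Para)) (κ : Para → Bool) :
    evalDesc 𝒮 κ = true ↔ ∃ S ∈ 𝒮, ∀ α ∈ S, κ α = true := by
  unfold evalDesc
  constructor
  · intro h
    by_contra hc
    push_neg at hc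
    have hle : (⨆ S ∈ 𝒮, ⨅ α ∈ S, κ α) ≤ false := by
      refine iSup₂_le fun S hS => ?_
      obtain ⟨α, hα, hκ⟩ := hc S hS
      calc (⨅ α ∈ S, κ α) ≤ κ α := biInf_le _ hα
        _ ≤ false := by simp at hκ; simp [hκ]
    rw [h] at hle
    exact absurd hle (by decide)
  · rintro ⟨S, hS, h⟩
    refine le_antisymm (by simp) ?_
    calc (true : Bool) = ⨅ α ∈ S, κ α := ((bool_iInf_eq_true_iff S κ).mpr h).symm
      _ ≤ _ := le_iSup₂ (f := fun S (_ : S ∈ 𝒮) => ⨅ α ∈ S, κ α) S hS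

lemma eval_modeProd {Para : Type*} (A B : Set (Set Para)) (κ : Para → Bool) :
    evalDesc (ModeProd A B) κ = (evalDesc A κ && evalDesc B κ) := by
  rw [Bool.eq_iff_iff]
  simp only [Bool.and_eq_true, bool_eval_eq_true_iff]
  constructor
  · rintro ⟨S, ⟨S₁, h₁, S₂, h₂, rfl⟩, h⟩
    exact ⟨⟨S₁, h₁, fun α hα => h α (Or.inl hα)⟩, ⟨S₂, h₂, fun α hα => h α (Or.inr hα)⟩⟩
  · rintro ⟨⟨S₁, h₁, hA⟩, ⟨S₂, h₂, hB⟩⟩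
    exact ⟨S₁ ∪ S₂, ⟨S₁, h₁, S₂, h₂, rfl⟩, fun α hα => hα.elim (hA α) (hB α)⟩

lemma pTermCon_modeProd {Para Term : Type*} (Ground : Set Term)
    (A B : Set (Set Para)) (κ : Para → Bool) :
    pTermCon Ground (ModeProd A B) κ = pTermCon Ground A κ ∩ pTermCon Ground B κ := by
  unfold pTermCon
  rw [eval_modeProd]
  cases hA : evalDesc A κ <;> cases hB : evalDesc B κ <;> simp [modecon]

/-- `Υ_sub` preserves binary meets: `Υ_sub(θ♯ ⊓ σ♯, κ) = Υ_sub(θ♯, κ) ∩ Υ_sub(σ♯, κ)`,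
where `(θ♯ ⊓ σ♯)(X) := θ♯(X) ⊛ σ♯(X)` is the pointwise meet. -/
theorem pSubCon_inter {Para V Term : Type*} (Ground : Set Term)
    (θs σs : V → Set (Set Para)) (κ : Para → Bool) :
    pSubCon Ground (fun X => ModeProd (θs X) (σs X)) κ =
      pSubCon Ground θs κ ∩ pSubCon Ground σs κ := by
  ext θ
  simp only [pSubCon, Set.mem_setOf_eq, Set.mem_inter_iff, pTermCon_modeProd]
  exact ⟨fun h => ⟨fun X => (h X).1, fun X => (h X).2⟩, fun h X => ⟨h.1 X, h.2 X⟩⟩
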